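/- Let λ_i > 0 and μ_i > 0 for i = 1, 2. If μ₁ ≤ μ₂ and λ₂ ≥ 2·max(λ₁, μ₂), then the ratio t ↦ φ^C_1(t)/φ^C_2(t) is monotone increasing on (0, ∞), i.e. τ^C_1 ≥_lr τ^C_2. -/
import Mathlib

open Real

lemma exp_slope {u v : ℝ} (hu : 0 < u) (huv : u ≤ v) :
    v * (Real.exp u - 1) ≤ u * (Real.exp v - 1) := by
  have hv : 0 < v := lt_of_lt_of_le hu huv
  have h : Real.exp ((1-u/v) • (0:ℝ) + (u/v) • v)
      ≤ (1-u/v) • Real.exp 0 + (u/v) • Real.exp v :=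
    convexOn_exp.2 (Set.mem_univ _) (Set.mem_univ _)
      (by rw [sub_nonneg]; exact div_le_one_of_le₀ huv hv.le)
      (by positivity) (by ring)
  simp only [smul_eq_mul, mul_zero, zero_add, Real.exp_zero, mul_one] at h
  rw [div_mul_cancel₀ u hv.ne'] at h
  have h2 := mul_le_mul_of_nonneg_left h hv.le
  have h3 : v * ((1 - u / v) + u / v * Real.exp v) = v - u + u * Real.exp v := by
    field_simp
  nlinarith [h2, h3]

lemma claimA {a b δ t : ℝ} (ha : 0 < a) (hab : a ≤ b) (hδ : b - a ≤ δ) (ht : 0 < t) :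
    0 ≤ δ * Real.sinh (a*t) * Real.sinh (b*t) + a * Real.cosh (a*t) * Real.sinh (b*t)
      - b * Real.sinh (a*t) * Real.cosh (b*t) := by
  have hb : 0 < b := lt_of_lt_of_le ha hab
  have hkey := exp_slope (u := 2*a*t) (v := 2*b*t) (by positivity) (by nlinarith)
  have e1 : Real.exp (2*a*t) = Real.exp (a*t)^2 := by rw [sq, ← Real.exp_add]; ring_nf
  have e2 : Real.exp (2*b*t) = Real.exp (b*t)^2 := by rw [sq, ← Real.exp_add]; ring_nf
  rw [e1, e2] at hkey
  have h1 : b * (Real.exp (a*t)^2 - 1) ≤ a * (Real.exp (b*t)^2 - 1) := by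
    nlinarith [hkey, ht]
  have hp : 0 < Real.exp (a*t) := Real.exp_pos _
  have hq : 0 < Real.exp (b*t) := Real.exp_pos _
  have hp1 : 1 ≤ Real.exp (a*t) := Real.one_le_exp (by positivity)
  have hq1 : 1 ≤ Real.exp (b*t) := Real.one_le_exp (by positivity)
  simp only [Real.sinh_eq, Real.cosh_eq, Real.exp_neg]
  set p := Real.exp (a*t)
  set q := Real.exp (b*t)
  have hN : 0 ≤ (δ - b + a)*(p^2-1)*(q^2-1) + 2*(a*(q^2-1) - b*(p^2-1)) := by
    nlinarith [mul_nonneg (mul_nonneg (by linarith : (0:ℝ) ≤ δ - b + a)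
      (by nlinarith : (0:ℝ) ≤ p^2 - 1)) (by nlinarith : (0:ℝ) ≤ q^2 - 1), h1]
  have heq : δ*((p-p⁻¹)/2)*((q-q⁻¹)/2) + a*((p+p⁻¹)/2)*((q-q⁻¹)/2)
      - b*((p-p⁻¹)/2)*((q+q⁻¹)/2)
      = ((δ - b + a)*(p^2-1)*(q^2-1) + 2*(a*(q^2-1) - b*(p^2-1)))/(4*p*q) := by
    field_simp
    ring
  rw [heq]
  exact div_nonneg hN (by positivity)

lemma mono_aux {a b δ : ℝ} (ha : 0 < a) (hab : a ≤ b) (hδ : b - a ≤ δ) :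
    MonotoneOn (fun t => Real.exp (δ*t) * Real.sinh (a*t) / Real.sinh (b*t))
      (Set.Ioi (0:ℝ)) := by
  have hb : 0 < b := lt_of_lt_of_le ha hab
  have hsinh : ∀ x ∈ Set.Ioi (0:ℝ), Real.sinh (b*x) ≠ 0 := fun x hx =>
    ne_of_gt (by rw [Real.sinh_pos_iff]; exact mul_pos hb hx)
  have hder : ∀ x ∈ Set.Ioi (0:ℝ), HasDerivAt
      (fun t => Real.exp (δ*t) * Real.sinh (a*t) / Real.sinh (b*t))
      (((Real.exp (δ*x) * (δ*1) * Real.sinh (a*x)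
          + Real.exp (δ*x) * (Real.cosh (a*x) * (a*1))) * Real.sinh (b*x)
        - Real.exp (δ*x) * Real.sinh (a*x) * (Real.cosh (b*x) * (b*1)))
        / Real.sinh (b*x) ^ 2) x := by
    intro x hx
    exact ((((hasDerivAt_id x).const_mul δ).exp.mul
      ((hasDerivAt_id x).const_mul a).sinh).div
      ((hasDerivAt_id x).const_mul b).sinh (hsinh x hx))
  apply monotoneOn_of_deriv_nonneg (convex_Ioi 0)
  · exact ContinuousOn.div (by fun_prop) (by fun_prop) hsinh
  · rw [interior_Ioi]
    exact fun x hx => ((hder x hx).differentiableAt).differentiableWithinAt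
  · rw [interior_Ioi]
    intro x hx
    rw [(hder x hx).deriv]
    apply div_nonneg _ (sq_nonneg _)
    have hA := claimA ha hab hδ hx
    have hE : 0 ≤ Real.exp (δ*x) := (Real.exp_pos _).le
    nlinarith [mul_nonneg hE hA]

/-- `b_i = sqrt(μ_i² + 4 λ_i μ_i)` for the cold standby system. -/
noncomputable def bC (l m : ℝ) : ℝ := Real.sqrt (m ^ 2 + 4 * l * m)

/-- Density of the lifetime of the Markovian two-unit cold standby system. -/
noncomputable def phiC (l m t : ℝ) : ℝ :=
  Real.exp (-((2 * l + m) * t / 2)) * (2 * l ^ 2 / bC l m) * Real.sinh (bC l m * t / 2)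

theorem cold_lr_example (l1 l2 m1 m2 : ℝ)
    (h1 : 0 < l1) (h2 : 0 < l2) (hm1 : 0 < m1) (hm2 : 0 < m2)
    (hmu : m1 ≤ m2) (hlam : l2 ≥ 2 * max l1 m2) :
    MonotoneOn (fun t : ℝ => phiC l1 m1 t / phiC l2 m2 t) (Set.Ioi (0 : ℝ)) := by
  have hl1 : 2 * l1 ≤ l2 := le_trans (by nlinarith [le_max_left l1 m2]) hlam
  have hm2l : 2 * m2 ≤ l2 := le_trans (by nlinarith [le_max_right l1 m2]) hlam
  set b1 := bC l1 m1 with hb1def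
  set b2 := bC l2 m2 with hb2def
  have hb1 : 0 < b1 := Real.sqrt_pos.2 (by positivity)
  have hb2 : 0 < b2 := Real.sqrt_pos.2 (by positivity)
  have hb12 : b1 ≤ b2 := Real.sqrt_le_sqrt (by nlinarith)
  -- b1 ≥ m1
  have hb1ge : m1 ≤ b1 := Real.le_sqrt_of_sq_le (by nlinarith)
  -- b2 ≤ l2 + m2
  have hb2le : b2 ≤ l2 + m2 := by
    rw [hb2def, bC, show l2 + m2 = Real.sqrt ((l2+m2)^2) from
      (Real.sqrt_sq (by positivity)).symm]
    exact Real.sqrt_le_sqrt (by nlinarith)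
  set δ : ℝ := (2*l2+m2)/2 - (2*l1+m1)/2 with hδdef
  have hkey := mono_aux (a := b1/2) (b := b2/2) (δ := δ)
    (by positivity) (by linarith) (by rw [hδdef]; linarith)
  set K : ℝ := (2 * l1 ^ 2 / b1) / (2 * l2 ^ 2 / b2) with hKdef
  have hK : 0 ≤ K := by positivity
  have heq : ∀ t ∈ Set.Ioi (0:ℝ), phiC l1 m1 t / phiC l2 m2 t
      = K * (Real.exp (δ*t) * Real.sinh (b1/2*t) / Real.sinh (b2/2*t)) := by
    intro t ht
    have ht' : (0:ℝ) < t := ht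
    have hs2 : Real.sinh (b2 * t / 2) ≠ 0 := ne_of_gt (by
      rw [Real.sinh_pos_iff]; positivity)
    have hE : Real.exp (δ*t) = Real.exp (-((2*l1+m1)*t/2)) / Real.exp (-((2*l2+m2)*t/2)) := by
      rw [← Real.exp_sub]; congr 1; rw [hδdef]; ring
    rw [phiC, phiC, ← hb1def, ← hb2def, hE,
      show b1/2*t = b1*t/2 by ring, show b2/2*t = b2*t/2 by ring]
    rw [hKdef]
    field_simp
  intro x hx y hy hxy
  simp only
  rw [heq x hx, heq y hy]
  exact mul_le_mul_of_nonneg_left (hkey hx hy hxy) hK
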